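/- If A and all formulas of Γ contain no occurrence of ∀ and A has the form ¬B, then Γ ⊢_NK ¬B if and only if Γ ⊢_NJ ¬B. -/

import Mathlib

/-! Every derivation, classical or not, becomes an intuitionistic derivation of `¬¬Aʲ` from
`Γʲ`: double negation is a monad in minimal logic, and under it reductio ad absurdum is just
¬-introduction.  Only →-introduction needs ex falso, to get `¬¬(A → B)` from `A ⊢ ¬¬B`, and
only ∀ has to be translated, into `¬∃¬`.  On ∀-free formulas `ʲ` is the identity, and
`¬¬¬B ⊢ ¬B`. -/

/-- First-order terms: variables (de Bruijn style indices for bound variables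
are merged with free variable indices) and function symbols with arguments. -/
inductive Term where
  | var : ℕ → Term
  | fn : ℕ → (ℕ → Term) → Term

/-- Lift (shift by one) all variables ≥ k. -/
def Term.lift (k : ℕ) : Term → Term
  | .var n => .var (if n < k then n else n + 1)
  | .fn f a => .fn f (fun i => (a i).lift k)

/-- Capture-avoiding substitution of the term `s` for variable `k` (de Bruijn). -/
def Term.subst (k : ℕ) (s : Term) : Term → Term
  | .var n => if n < k then .var n else if n = k then s else .var (n - 1)
  | .fn f a => .fn f (fun i => Term.subst k s (a i))

/-- Free variables of a term. -/
def Term.fv : Term → Set ℕ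
  | .var n => {n}
  | .fn _ a => ⋃ i, (a i).fv

/-- First-order formulas with primitive negation, de Bruijn binders. -/
inductive Formula where
  | pred : ℕ → (ℕ → Term) → Formula
  | bot : Formula
  | top : Formula
  | neg : Formula → Formula
  | conj : Formula → Formula → Formula
  | disj : Formula → Formula → Formula
  | impl : Formula → Formula → Formula
  | all : Formula → Formula
  | ex : Formula → Formula

def Formula.lift (k : ℕ) : Formula → Formula
  | .pred r a => .pred r (fun i => (a i).lift k)
  | .bot => .bot
  | .top => .top
  | .neg A => .neg (A.lift k)
  | .conj A B => .conj (A.lift k) (B.lift k)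
  | .disj A B => .disj (A.lift k) (B.lift k)
  | .impl A B => .impl (A.lift k) (B.lift k)
  | .all A => .all (A.lift (k + 1))
  | .ex A => .ex (A.lift (k + 1))

/-- Capture-avoiding substitution of term `s` for variable `k` in a formula. -/
def Formula.subst (k : ℕ) (s : Term) : Formula → Formula
  | .pred r a => .pred r (fun i => Term.subst k s (a i))
  | .bot => .bot
  | .top => .top
  | .neg A => .neg (A.subst k s)
  | .conj A B => .conj (A.subst k s) (B.subst k s)
  | .disj A B => .disj (A.subst k s) (B.subst k s)
  | .impl A B => .impl (A.subst k s) (B.subst k s)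
  | .all A => .all (A.subst (k + 1) (s.lift 0))
  | .ex A => .ex (A.subst (k + 1) (s.lift 0))

/-- Free variables of a formula. -/
def Formula.fv : Formula → Set ℕ
  | .pred _ a => ⋃ i, (a i).fv
  | .bot => ∅
  | .top => ∅
  | .neg A => A.fv
  | .conj A B => A.fv ∪ B.fv
  | .disj A B => A.fv ∪ B.fv
  | .impl A B => A.fv ∪ B.fv
  | .all A => {n | n + 1 ∈ A.fv}
  | .ex A => {n | n + 1 ∈ A.fv}

/-- Object-level biconditional, as a defined connective. -/
def Formula.fIff (A B : Formula) : Formula := .conj (.impl A B) (.impl B A)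

/-- `A` contains no occurrence of the universal quantifier ∀. -/
def Formula.forallFree : Formula → Prop
  | .pred _ _ => True
  | .bot => True
  | .top => True
  | .neg A => A.forallFree
  | .conj A B => A.forallFree ∧ B.forallFree
  | .disj A B => A.forallFree ∧ B.forallFree
  | .impl A B => A.forallFree ∧ B.forallFree
  | .all _ => False
  | .ex A => A.forallFree

/-- `A` contains no occurrence of implication →. -/
def Formula.impFree : Formula → Prop
  | .pred _ _ => True
  | .bot => True
  | .top => True
  | .neg A => A.impFree
  | .conj A B => A.impFree ∧ B.impFree
  | .disj A B => A.impFree ∧ B.impFree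
  | .impl _ _ => False
  | .all A => A.impFree
  | .ex A => A.impFree

/-- The minimal translation (·)^m. -/
def Formula.mtr : Formula → Formula
  | .pred r a => .pred r a
  | .bot => .bot
  | .top => .top
  | .neg A => .neg A.mtr
  | .conj A B => .conj A.mtr B.mtr
  | .disj A B => .disj A.mtr B.mtr
  | .impl A B => .disj (.neg A.mtr) B.mtr
  | .all A => .neg (.ex (.neg A.mtr))
  | .ex A => .ex A.mtr

/-- The intuitionistic translation (·)^j. -/
def Formula.jtr : Formula → Formula
  | .pred r a => .pred r a
  | .bot => .bot
  | .top => .top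
  | .neg A => .neg A.jtr
  | .conj A B => .conj A.jtr B.jtr
  | .disj A B => .disj A.jtr B.jtr
  | .impl A B => .impl A.jtr B.jtr
  | .all A => .neg (.ex (.neg A.jtr))
  | .ex A => .ex A.jtr

/-- Negative formulas: built from negated atoms, ⊥, ⊤ using only ¬, ∧, →, ∀. -/
inductive Formula.Negative : Formula → Prop where
  | negAtom : ∀ r a, Formula.Negative (.neg (.pred r a))
  | bot : Formula.Negative .bot
  | top : Formula.Negative .top
  | neg : ∀ {A}, Formula.Negative A → Formula.Negative (.neg A)
  | conj : ∀ {A B}, Formula.Negative A → Formula.Negative B → Formula.Negative (.conj A B)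
  | impl : ∀ {A B}, Formula.Negative A → Formula.Negative B → Formula.Negative (.impl A B)
  | all : ∀ {A}, Formula.Negative A → Formula.Negative (.all A)

/-- Natural deduction derivability; the flags `efq`, `raa` tell whether the
ex falso quodlibet and reductio ad absurdum rules are available.  `Deriv efq raa Γ A`
means `A` is derivable with undischarged assumptions among `Γ`. -/
inductive Deriv (efq raa : Bool) : Set Formula → Formula → Prop where
  | hyp : ∀ {Γ A}, A ∈ Γ → Deriv efq raa Γ A
  | topI : ∀ {Γ}, Deriv efq raa Γ .top
  | negI : ∀ {Γ A}, Deriv efq raa (insert A Γ) .bot → Deriv efq raa Γ (.neg A)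
  | negE : ∀ {Γ A}, Deriv efq raa Γ (.neg A) → Deriv efq raa Γ A → Deriv efq raa Γ .bot
  | conjI : ∀ {Γ A B}, Deriv efq raa Γ A → Deriv efq raa Γ B → Deriv efq raa Γ (.conj A B)
  | conjE1 : ∀ {Γ A B}, Deriv efq raa Γ (.conj A B) → Deriv efq raa Γ A
  | conjE2 : ∀ {Γ A B}, Deriv efq raa Γ (.conj A B) → Deriv efq raa Γ B
  | disjI1 : ∀ {Γ A B}, Deriv efq raa Γ A → Deriv efq raa Γ (.disj A B)
  | disjI2 : ∀ {Γ A B}, Deriv efq raa Γ B → Deriv efq raa Γ (.disj A B)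
  | disjE : ∀ {Γ A B C}, Deriv efq raa Γ (.disj A B) → Deriv efq raa (insert A Γ) C →
      Deriv efq raa (insert B Γ) C → Deriv efq raa Γ C
  | implI : ∀ {Γ A B}, Deriv efq raa (insert A Γ) B → Deriv efq raa Γ (.impl A B)
  | implE : ∀ {Γ A B}, Deriv efq raa Γ (.impl A B) → Deriv efq raa Γ A → Deriv efq raa Γ B
  | allI : ∀ {Γ A}, Deriv efq raa (Formula.lift 0 '' Γ) A → Deriv efq raa Γ (.all A)
  | allE : ∀ {Γ A} (t : Term), Deriv efq raa Γ (.all A) → Deriv efq raa Γ (A.subst 0 t)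
  | exI : ∀ {Γ A} (t : Term), Deriv efq raa Γ (A.subst 0 t) → Deriv efq raa Γ (.ex A)
  | exE : ∀ {Γ A C}, Deriv efq raa Γ (.ex A) →
      Deriv efq raa (insert A (Formula.lift 0 '' Γ)) (C.lift 0) → Deriv efq raa Γ C
  | efqR : ∀ {Γ A}, efq = true → Deriv efq raa Γ .bot → Deriv efq raa Γ A
  | raaR : ∀ {Γ A}, raa = true → Deriv efq raa (insert (.neg A) Γ) .bot → Deriv efq raa Γ A

/-- Minimal natural deduction. -/
def NM : Set Formula → Formula → Prop := Deriv false false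
/-- Intuitionistic natural deduction. -/
def NJ : Set Formula → Formula → Prop := Deriv true false
/-- Classical natural deduction (minimal + reductio ad absurdum). -/
def NK : Set Formula → Formula → Prop := Deriv false true


namespace Formula

theorem jtr_lift (k : ℕ) (A : Formula) : (A.lift k).jtr = A.jtr.lift k := by
  induction A generalizing k <;> simp_all [jtr, lift]

theorem jtr_subst (k : ℕ) (s : Term) (A : Formula) : (A.subst k s).jtr = A.jtr.subst k s := by
  induction A generalizing k s <;> simp_all [jtr, subst]

theorem jtr_eq_self_of_forallFree {A : Formula} (h : A.forallFree) : A.jtr = A := by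
  induction A <;> simp_all [jtr, forallFree]

theorem image_jtr_image_lift (Γ : Set Formula) : jtr '' (lift 0 '' Γ) = lift 0 '' (jtr '' Γ) := by
  simp only [Set.image_image, jtr_lift]

theorem image_jtr_eq_self_of_forallFree {Γ : Set Formula} (hΓ : ∀ C ∈ Γ, C.forallFree) :
    jtr '' Γ = Γ :=
  (Set.image_congr fun C hC => jtr_eq_self_of_forallFree (hΓ C hC)).trans (Set.image_id' Γ)

end Formula

namespace Deriv

variable {e r : Bool} {Γ Δ : Set Formula} {A B : Formula}

theorem weaken (h : Deriv e r Γ A) (hs : Γ ⊆ Δ) : Deriv e r Δ A := by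
  induction h generalizing Δ with
  | hyp hA => exact .hyp (hs hA)
  | topI => exact .topI
  | negI _ ih => exact .negI (ih (Set.insert_subset_insert hs))
  | negE _ _ ih₁ ih₂ => exact .negE (ih₁ hs) (ih₂ hs)
  | conjI _ _ ih₁ ih₂ => exact .conjI (ih₁ hs) (ih₂ hs)
  | conjE1 _ ih => exact .conjE1 (ih hs)
  | conjE2 _ ih => exact .conjE2 (ih hs)
  | disjI1 _ ih => exact .disjI1 (ih hs)
  | disjI2 _ ih => exact .disjI2 (ih hs)
  | disjE _ _ _ ih ih₁ ih₂ =>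
      exact .disjE (ih hs) (ih₁ (Set.insert_subset_insert hs)) (ih₂ (Set.insert_subset_insert hs))
  | implI _ ih => exact .implI (ih (Set.insert_subset_insert hs))
  | implE _ _ ih₁ ih₂ => exact .implE (ih₁ hs) (ih₂ hs)
  | allI _ ih => exact .allI (ih (Set.image_mono hs))
  | allE t _ ih => exact .allE t (ih hs)
  | exI t _ ih => exact .exI t (ih hs)
  | exE _ _ ih₁ ih₂ => exact .exE (ih₁ hs) (ih₂ (Set.insert_subset_insert (Set.image_mono hs)))
  | efqR he _ ih => exact .efqR he (ih hs)
  | raaR hr _ ih => exact .raaR hr (ih (Set.insert_subset_insert hs))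

theorem weaken_insert (h : Deriv e r Γ A) : Deriv e r (insert B Γ) A :=
  h.weaken (Set.subset_insert _ _)

theorem head : Deriv e r (insert A Γ) A :=
  .hyp (Set.mem_insert _ _)

theorem head_of_insert : Deriv e r (insert B (insert A Γ)) A :=
  head.weaken_insert

theorem neg_neg_intro (h : Deriv e r Γ A) : Deriv e r Γ (.neg (.neg A)) :=
  .negI (.negE head h.weaken_insert)

theorem neg_neg_bind (h : Deriv e r Γ (.neg (.neg A)))
    (k : Deriv e r (insert A Γ) (.neg (.neg B))) : Deriv e r Γ (.neg (.neg B)) :=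
  .negI (.negE h.weaken_insert (.negI (.negE (k.weaken (Set.insert_subset_insert
    (Set.subset_insert _ _))) head_of_insert)))

theorem neg_of_neg_neg_neg (h : Deriv e r Γ (.neg (.neg (.neg A)))) : Deriv e r Γ (.neg A) :=
  .negI (.negE h.weaken_insert (neg_neg_intro head))

theorem bot_of_neg_neg_bot (h : Deriv e r Γ (.neg (.neg .bot))) : Deriv e r Γ .bot :=
  .negE h (.negI head)

theorem neg_neg_impl (h : Deriv true r (insert A Γ) (.neg (.neg B))) :
    Deriv true r Γ (.neg (.neg (.impl A B))) := by
  have hB : Deriv true r (insert A (insert (.neg (.impl A B)) Γ)) (.neg (.neg B)) :=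
    h.weaken (Set.insert_subset_insert (Set.subset_insert _ _))
  refine .negI (.negE head (.implI (.efqR rfl (.negE hB (.negI ?_)))))
  exact .negE head_of_insert.weaken_insert (.implI head.weaken_insert)

theorem neg_ex_neg_of_neg_neg (h : Deriv e r (Formula.lift 0 '' Γ) (.neg (.neg A))) :
    Deriv e r Γ (.neg (.ex (.neg A))) :=
  .negI (.exE (C := .bot) head
    (.negE (h.weaken (Set.image_mono (Set.subset_insert _ _))).weaken_insert head))

theorem neg_neg_jtr (h : Deriv e r Γ A) :
    Deriv true false (Formula.jtr '' Γ) (.neg (.neg A.jtr)) := by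
  induction h with
  | hyp hA => exact neg_neg_intro (.hyp ⟨_, hA, rfl⟩)
  | topI => exact neg_neg_intro .topI
  | negI _ ih =>
      rw [Set.image_insert_eq] at ih
      exact neg_neg_intro (.negI (bot_of_neg_neg_bot ih))
  | negE _ _ ih₁ ih₂ => exact neg_neg_intro (.negE ih₂ (neg_of_neg_neg_neg ih₁))
  | conjI _ _ ih₁ ih₂ =>
      exact neg_neg_bind ih₁ (neg_neg_bind ih₂.weaken_insert (neg_neg_intro
        (.conjI head_of_insert head)))
  | conjE1 _ ih => exact neg_neg_bind ih (neg_neg_intro (.conjE1 head))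
  | conjE2 _ ih => exact neg_neg_bind ih (neg_neg_intro (.conjE2 head))
  | disjI1 _ ih => exact neg_neg_bind ih (neg_neg_intro (.disjI1 head))
  | disjI2 _ ih => exact neg_neg_bind ih (neg_neg_intro (.disjI2 head))
  | disjE _ _ _ ih ih₁ ih₂ =>
      rw [Set.image_insert_eq] at ih₁ ih₂
      exact neg_neg_bind ih (.disjE head
        (ih₁.weaken (Set.insert_subset_insert (Set.subset_insert _ _)))
        (ih₂.weaken (Set.insert_subset_insert (Set.subset_insert _ _))))
  | implI _ ih =>
      rw [Set.image_insert_eq] at ih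
      exact neg_neg_impl ih
  | implE _ _ ih₁ ih₂ =>
      exact neg_neg_bind ih₁ (neg_neg_bind ih₂.weaken_insert (neg_neg_intro
        (.implE head_of_insert head)))
  | allI _ ih =>
      rw [Formula.image_jtr_image_lift] at ih
      exact neg_neg_intro (neg_ex_neg_of_neg_neg ih)
  | allE t _ ih =>
      rw [Formula.jtr_subst]
      exact .negI (.negE (neg_of_neg_neg_neg ih).weaken_insert (.exI (A := .neg _) t head))
  | exI t _ ih =>
      rw [Formula.jtr_subst] at ih
      exact neg_neg_bind ih (neg_neg_intro (.exI t head))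
  | exE _ _ ih₁ ih₂ =>
      rw [Set.image_insert_eq, Formula.image_jtr_image_lift, Formula.jtr_lift] at ih₂
      exact neg_neg_bind ih₁ (.exE head
        (ih₂.weaken (Set.insert_subset_insert (Set.image_mono (Set.subset_insert _ _)))))
  | efqR _ _ ih => exact .negI (bot_of_neg_neg_bot ih).weaken_insert
  | raaR _ _ ih =>
      rw [Set.image_insert_eq] at ih
      exact .negI (bot_of_neg_neg_bot ih)

theorem of_nj (h : Deriv true false Γ A) : Deriv false true Γ A := by
  induction h with
  | hyp hA => exact .hyp hA
  | topI => exact .topI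
  | negI _ ih => exact .negI ih
  | negE _ _ ih₁ ih₂ => exact .negE ih₁ ih₂
  | conjI _ _ ih₁ ih₂ => exact .conjI ih₁ ih₂
  | conjE1 _ ih => exact .conjE1 ih
  | conjE2 _ ih => exact .conjE2 ih
  | disjI1 _ ih => exact .disjI1 ih
  | disjI2 _ ih => exact .disjI2 ih
  | disjE _ _ _ ih ih₁ ih₂ => exact .disjE ih ih₁ ih₂
  | implI _ ih => exact .implI ih
  | implE _ _ ih₁ ih₂ => exact .implE ih₁ ih₂
  | allI _ ih => exact .allI ih
  | allE t _ ih => exact .allE t ih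
  | exI t _ ih => exact .exI t ih
  | exE _ _ ih₁ ih₂ => exact .exE ih₁ ih₂
  | efqR _ _ ih => exact .raaR rfl ih.weaken_insert
  | raaR hr => exact absurd hr Bool.false_ne_true

end Deriv

/-- For negated formulas in the ∀-free fragment, classical and intuitionistic
derivability coincide. -/
theorem glivenko_intuitionistic_neg (Γ : Set Formula) (B : Formula)
    (hB : (Formula.neg B).forallFree)
    (hΓ : ∀ C ∈ Γ, C.forallFree) :
    NK Γ (.neg B) ↔ NJ Γ (.neg B) := by
  refine ⟨fun h => ?_, Deriv.of_nj⟩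
  have h' := Deriv.neg_neg_jtr h
  rw [Formula.image_jtr_eq_self_of_forallFree hΓ, Formula.jtr_eq_self_of_forallFree hB] at h'
  exact Deriv.neg_of_neg_neg_neg h'
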